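/- arXiv:1406.6771 — 2 statements merged into one kernel-verified Lean document; each statement's English description precedes it below -/
import Mathlib

section
/- Let k be an integer with 1 ≤ k ≤ n and gcd(k,n) ≠ 1. If gcd(k,M) = 1 and M ≠ n, then the unit u_k = a^k + (a-1)bâ has finite order exactly n/gcd(k,n) in U(𝕂G). -/
/-!
Write `A`, `B` for the images of `a`, `b` in `𝕂G`, `D = (A - 1) B â` and `S_m = ∑_{i<m} A^{ki}`.
Since `â` absorbs `A` on both sides, `D A = D` and `D² = 0`, so `u_k^m = A^{km} + S_m D`.
The term `S_m D` is supported on the double coset `⟨a⟩ b ⟨a⟩`, which misses `⟨a⟩`, so `u_k^m = 1`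
forces `a^{km} = 1`. Conversely, if `a^{km} = 1` then `S_m A^k = S_m`; since `b` normalises `⟨a^M⟩`,
`A^M` fixes `B â`, and choosing `j` with `kj ≡ 1 (mod M)` gives `S_m A B â = S_m A^{kj} B â = S_m B â`,
that is `S_m D = 0`. Hence `u_k` has the order of `a^k`, namely `n / gcd(k, n)`.
-/

open Finset

section Monoid

variable {R : Type*} [Monoid R] {x y : R}

theorem pow_mul_eq_self_of_mul_eq_self (h : x * y = y) (j : ℕ) : x ^ j * y = y := by
  induction j with
  | zero => rw [pow_zero, one_mul]
  | succ j ih => rw [pow_succ, mul_assoc, h, ih]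

theorem mul_pow_eq_self_of_mul_eq_self (h : y * x = y) (j : ℕ) : y * x ^ j = y := by
  induction j with
  | zero => rw [pow_zero, mul_one]
  | succ j ih => rw [pow_succ, ← mul_assoc, ih, h]

theorem pow_mod_mul_eq_pow_mul {M : ℕ} (h : x ^ M * y = y) (s : ℕ) :
    x ^ (s % M) * y = x ^ s * y := by
  conv_rhs => rw [← Nat.mod_add_div s M, pow_add, pow_mul, mul_assoc,
    pow_mul_eq_self_of_mul_eq_self h]

end Monoid

section Ring

variable {R : Type*} [Ring R]

theorem geom_sum_mul_eq_self_of_pow_eq_one {x : R} {n : ℕ} (h : x ^ n = 1) :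
    (∑ i ∈ range n, x ^ i) * x = ∑ i ∈ range n, x ^ i := by
  simpa [h, mul_sub_one, sub_eq_zero] using geom_sum_mul x n

theorem mul_geom_sum_eq_self_of_pow_eq_one {x : R} {n : ℕ} (h : x ^ n = 1) :
    x * ∑ i ∈ range n, x ^ i = ∑ i ∈ range n, x ^ i := by
  simpa [h, sub_one_mul, sub_eq_zero] using mul_geom_sum x n

theorem add_pow_eq_pow_add_geom_sum_mul {c d : R} (hdc : d * c = d) (hdd : d * d = 0) (m : ℕ) :
    (c + d) ^ m = c ^ m + (∑ i ∈ range m, c ^ i) * d := by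
  induction m with
  | zero => simp
  | succ m ih =>
    rw [pow_succ, ih, sum_range_succ, add_mul, mul_add, mul_add, mul_assoc _ d c, hdc,
      mul_assoc _ d d, hdd, mul_zero, add_zero, pow_succ, add_mul]
    abel

theorem pow_add_sub_one_mul_mul_pow {A B E : R} (hE : E * A = E) (k m : ℕ) :
    (A ^ k + (A - 1) * B * E) ^ m =
      A ^ (k * m) + (∑ i ∈ range m, (A ^ k) ^ i) * (A - 1) * B * E := by
  have hEsq : (A - 1) * B * E * ((A - 1) * B * E) = 0 := by
    rw [show (A - 1) * B * E * ((A - 1) * B * E) = (A - 1) * B * (E * A - E) * B * E by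
      noncomm_ring, hE, sub_self, mul_zero, zero_mul, zero_mul]
  rw [add_pow_eq_pow_add_geom_sum_mul (mul_pow_eq_self_of_mul_eq_self (by rw [mul_assoc, hE]) k)
    hEsq, pow_mul]
  simp only [mul_assoc]

theorem geom_sum_pow_mul_sub_one_mul_eq_zero {A Y : R} {k m M : ℕ} (hY : A ^ M * Y = Y)
    (hkM : Nat.Coprime k M) (hM : M ≠ 0) (hm : (A ^ k) ^ m = 1) :
    (∑ i ∈ range m, (A ^ k) ^ i) * (A - 1) * Y = 0 := by
  obtain ⟨j, -, hj⟩ := Nat.exists_mul_mod_eq_of_coprime 1 hkM hM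
  have hAY : A * Y = (A ^ k) ^ j * Y := by
    rw [← pow_mul, ← pow_mod_mul_eq_pow_mul hY, hj, pow_mod_mul_eq_pow_mul hY, pow_one]
  rw [mul_sub_one, sub_mul, mul_assoc, hAY, ← mul_assoc,
    mul_pow_eq_self_of_mul_eq_self (geom_sum_mul_eq_self_of_pow_eq_one hm), sub_self]

end Ring

namespace MonoidAlgebra

variable {𝕜 G : Type*} [CommRing 𝕜]

noncomputable def supportedSubalgebra [Monoid G] (H : Submonoid G) :
    Subalgebra 𝕜 (MonoidAlgebra 𝕜 G) :=
  (supported 𝕜 𝕜 (H : Set G)).toSubalgebra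
    (fun g hg => by
      classical
      rw [Finset.mem_one.mp (support_coeff_one_subset hg)]
      exact H.one_mem)
    (fun x y hx hy g hg => by
      classical
      obtain ⟨g₁, hg₁, g₂, hg₂, rfl⟩ := Finset.mem_mul.mp (support_coeff_mul_subset x y hg)
      exact H.mul_mem (hx hg₁) (hy hg₂))

theorem of_mem_supportedSubalgebra [Monoid G] {H : Submonoid G} {g : G} (hg : g ∈ H) :
    of 𝕜 G g ∈ supportedSubalgebra H := fun g' hg' => by
  rwa [Finset.mem_singleton.mp (Finsupp.support_single_subset hg')]

variable [Group G]

theorem eq_of_add_mul_of_mul_eq {H : Subgroup G} {b : G} (hb : b ∉ H)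
    {p q x y : MonoidAlgebra 𝕜 G} (hp : p ∈ supportedSubalgebra H.toSubmonoid)
    (hq : q ∈ supportedSubalgebra H.toSubmonoid) (hx : x ∈ supportedSubalgebra H.toSubmonoid)
    (hy : y ∈ supportedSubalgebra H.toSubmonoid) (h : p + x * of 𝕜 G b * y = q) : p = q := by
  classical
  have hxby : ∀ g ∈ H, (x * of 𝕜 G b * y).coeff g = 0 := by
    intro g hg
    by_contra hne
    obtain ⟨g₁, hg₁, g₂, hg₂, rfl⟩ :=
      Finset.mem_mul.mp (support_coeff_mul_subset _ y (Finsupp.mem_support_iff.mpr hne))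
    obtain ⟨g₀, hg₀, g₃, hg₃, rfl⟩ := Finset.mem_mul.mp (support_coeff_mul_subset x _ hg₁)
    rw [Finset.mem_singleton.mp (Finsupp.support_single_subset hg₃)] at hg
    apply hb
    convert H.mul_mem (H.mul_mem (H.inv_mem (hx hg₀)) hg) (H.inv_mem (hy hg₂)) using 1
    group
  refine coeff_injective (Finsupp.ext fun g => ?_)
  by_cases hg : g ∈ H
  · have hcoeff := congrArg (fun z => z.coeff g) h
    rwa [coeff_add, Finsupp.add_apply, hxby g hg, add_zero] at hcoeff
  · rw [(mem_supported' (R := 𝕜)).mp hp g hg, (mem_supported' (R := 𝕜)).mp hq g hg]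

theorem sum_pow_orderOf_mul_of (a : G) :
    (∑ i ∈ range (orderOf a), of 𝕜 G a ^ i) * of 𝕜 G a = ∑ i ∈ range (orderOf a), of 𝕜 G a ^ i :=
  geom_sum_mul_eq_self_of_pow_eq_one (by rw [← map_pow, pow_orderOf_eq_one, map_one])

theorem of_mul_sum_pow_orderOf {a g : G} (hg : g ∈ Subgroup.zpowers a) :
    of 𝕜 G g * ∑ i ∈ range (orderOf a), of 𝕜 G a ^ i = ∑ i ∈ range (orderOf a), of 𝕜 G a ^ i := by
  rcases (orderOf a).eq_zero_or_pos with h | h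
  · rw [h, sum_range_zero, mul_zero]
  obtain ⟨j, rfl⟩ := (orderOf_pos_iff.mp h).mem_powers_iff_mem_zpowers.mpr hg
  rw [map_pow]
  refine pow_mul_eq_self_of_mul_eq_self (mul_geom_sum_eq_self_of_pow_eq_one ?_) j
  rw [← map_pow, pow_orderOf_eq_one, map_one]

theorem of_mul_of_mul_sum_pow_orderOf {a b g : G}
    (hb : b ∈ Subgroup.normalizer (Subgroup.zpowers g)) (hg : g ∈ Subgroup.zpowers a) :
    of 𝕜 G g * (of 𝕜 G b * ∑ i ∈ range (orderOf a), of 𝕜 G a ^ i) =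
      of 𝕜 G b * ∑ i ∈ range (orderOf a), of 𝕜 G a ^ i := by
  have hconj : b⁻¹ * g * b ∈ Subgroup.zpowers a :=
    Subgroup.zpowers_le.mpr hg <|
      (Subgroup.mem_normalizer_iff''.mp hb g).mp (Subgroup.mem_zpowers g)
  rw [← mul_assoc, ← map_mul, show g * b = b * (b⁻¹ * g * b) by group, map_mul, mul_assoc,
    of_mul_sum_pow_orderOf hconj]

end MonoidAlgebra

open MonoidAlgebra

theorem stmt_10_general {𝕂 : Type*} [CommRing 𝕂] [IsDomain 𝕂]
    {G : Type*} [Group G] (a b : G) (n : ℕ) (ha : orderOf a = n)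
    (hb : b ∉ Subgroup.normalizer (Subgroup.zpowers a))
    (ahat : MonoidAlgebra 𝕂 G)
    (hahat : ahat = ∑ i ∈ Finset.range n, (MonoidAlgebra.of 𝕂 G a) ^ i)
    (M : ℕ) (hM2 : 2 ≤ M)
    (hMmem : b ∈ Subgroup.normalizer (Subgroup.zpowers (a ^ M)))
    (k : ℕ) (hk1 : 1 ≤ k)
    (hkM : Nat.gcd k M = 1)
    (u : (MonoidAlgebra 𝕂 G)ˣ)
    (hu : (u : MonoidAlgebra 𝕂 G) = MonoidAlgebra.of 𝕂 G a ^ k + (MonoidAlgebra.of 𝕂 G a - 1) * MonoidAlgebra.of 𝕂 G b * ahat) :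
    orderOf u = n / Nat.gcd k n := by
  subst ha hahat
  set A := of 𝕂 G a
  have hA : A ∈ supportedSubalgebra (Subgroup.zpowers a).toSubmonoid :=
    of_mem_supportedSubalgebra (Subgroup.mem_zpowers a)
  have key (m : ℕ) : u ^ m = 1 ↔ (a ^ k) ^ m = 1 := by
    rw [← Units.val_eq_one, Units.val_pow_eq_pow_val, hu,
      pow_add_sub_one_mul_mul_pow (sum_pow_orderOf_mul_of a), ← pow_mul]
    constructor
    · intro h
      refine of_injective (R := 𝕂) ?_
      rw [map_one, map_pow]
      exact eq_of_add_mul_of_mul_eq (fun h => hb (Subgroup.le_normalizer h)) (pow_mem hA _)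
        (one_mem _) (mul_mem (sum_mem fun i _ => pow_mem (pow_mem hA k) i) (sub_mem hA (one_mem _)))
        (sum_mem fun i _ => pow_mem hA i) h
    · intro h
      have hAM := of_mul_of_mul_sum_pow_orderOf (𝕜 := 𝕂) hMmem (Subgroup.npow_mem_zpowers a M)
      rw [map_pow] at hAM
      rw [← map_pow, h, map_one, add_eq_left, mul_assoc _ (of 𝕂 G b)]
      exact geom_sum_pow_mul_sub_one_mul_eq_zero hAM hkM (by omega)
        (by rw [← pow_mul, ← map_pow, h, map_one])
  rw [orderOf_eq_orderOf_iff.mpr key, orderOf_pow' a (by omega), Nat.gcd_comm]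

theorem stmt_10 {𝕂 : Type*} [CommRing 𝕂] [IsDomain 𝕂]
    {G : Type*} [Group G] (a b : G) (n : ℕ) (hn : 2 ≤ n) (ha : orderOf a = n)
    (hA : ¬ (Subgroup.zpowers a).Normal)
    (hb : b ∉ Subgroup.normalizer (Subgroup.zpowers a))
    (ahat : MonoidAlgebra 𝕂 G)
    (hahat : ahat = ∑ i ∈ Finset.range n, (MonoidAlgebra.of 𝕂 G a) ^ i)
    (M : ℕ) (hM2 : 2 ≤ M) (hMn : M ≤ n)
    (hMmem : b ∈ Subgroup.normalizer (Subgroup.zpowers (a ^ M)))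
    (hMmin : ∀ m : ℕ, 2 ≤ m → m < M → b ∉ Subgroup.normalizer (Subgroup.zpowers (a ^ m)))
    (k : ℕ) (hk1 : 1 ≤ k) (hkn : k ≤ n) (hgcd : Nat.gcd k n ≠ 1)
    (hkM : Nat.gcd k M = 1) (hMne : M ≠ n)
    (u : (MonoidAlgebra 𝕂 G)ˣ)
    (hu : (u : MonoidAlgebra 𝕂 G) = MonoidAlgebra.of 𝕂 G a ^ k + (MonoidAlgebra.of 𝕂 G a - 1) * MonoidAlgebra.of 𝕂 G b * ahat) :
    orderOf u = n / Nat.gcd k n :=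
  stmt_10_general a b n ha hb ahat hahat M hM2 hMmem k hk1 hkM u hu
end

section
/- The element w = 1 + (a-1)bâ is a unit of 𝕂G satisfying w^m = 1 + m·(a-1)bâ for every integer m. Moreover (a-1)bâ ≠ 0, so w ≠ 1; consequently, if 𝕂 has characteristic zero then w has infinite order in U(𝕂G). -/
/-!
Since `a ^ n = 1`, the geometric sum gives `â * (a - 1) = 0`, so `x = (a - 1) * b * â` squares to
zero. Hence `(1 + x) * (1 - x) = 1` and `(1 + x) ^ m = 1 + m • x`, which in characteristic zero
is `1` only for `m = 0`, provided `x ≠ 0`. The coefficient of `a * b` in `x` is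
`â(1) - â(b⁻¹ * a * b) = 1 - [b⁻¹ * a * b ∈ ⟨a⟩]`; and if `b⁻¹ * a * b ∈ ⟨a⟩`, conjugation by
`b⁻¹` maps the finite group `⟨a⟩` into, hence onto, itself, so `b` normalizes `⟨a⟩`.
-/

open Finset MonoidAlgebra

section SquareZero

variable {R : Type*} [Ring R] {x : R}

theorem one_add_mul_one_sub_of_mul_self_eq_zero (hx : x * x = 0) : (1 + x) * (1 - x) = 1 := by
  rw [← (Commute.one_left x).mul_self_sub_mul_self_eq, hx, mul_one, sub_zero]

theorem one_sub_mul_one_add_of_mul_self_eq_zero (hx : x * x = 0) : (1 - x) * (1 + x) = 1 := by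
  simpa [sub_eq_add_neg] using one_add_mul_one_sub_of_mul_self_eq_zero (x := -x) (by simpa using hx)

theorem Units.val_zpow_of_val_eq_one_add (hx : x * x = 0) {w : Rˣ} (hw : (w : R) = 1 + x)
    (m : ℤ) : ((w ^ m : Rˣ) : R) = 1 + m • x := by
  have hw_inv : ((w⁻¹ : Rˣ) : R) = 1 - x :=
    Units.inv_eq_of_mul_eq_one_right (hw ▸ one_add_mul_one_sub_of_mul_self_eq_zero hx)
  induction m using Int.induction_on with
  | zero => simp
  | succ k ih =>
    rw [zpow_add_one, Units.val_mul, ih, hw, add_smul, one_smul]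
    noncomm_ring
    simp [hx]
  | pred k ih =>
    rw [zpow_sub_one, Units.val_mul, ih, hw_inv, sub_smul, one_smul]
    noncomm_ring
    simp [hx]

theorem not_isOfFinOrder_of_val_eq_one_add [IsAddTorsionFree R] (hx : x * x = 0) (hx0 : x ≠ 0)
    {w : Rˣ} (hw : (w : R) = 1 + x) : ¬IsOfFinOrder w := by
  intro hfin
  obtain ⟨k, hk, hwk⟩ := isOfFinOrder_iff_pow_eq_one.mp hfin
  have hkx : k • x = 0 := by
    simpa [hwk] using Units.val_zpow_of_val_eq_one_add hx hw k
  exact hx0 ((smul_eq_zero.mp hkx).resolve_left hk.ne')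

end SquareZero

theorem Subgroup.mem_normalizer_zpowers_of_conj_mem {G : Type*} [Group G] {a g : G}
    (ha : IsOfFinOrder a) (h : g * a * g⁻¹ ∈ zpowers a) : g ∈ normalizer (zpowers a) := by
  have : Finite (zpowers a) := ha.finite_zpowers
  rw [mem_normalizer_iff_map_conj_eq]
  refine eq_of_le_of_card_ge ?_ (card_map_of_injective (MulAut.conj g).injective).ge
  rw [MonoidHom.map_zpowers, zpowers_le]
  exact h

namespace MonoidAlgebra

variable {k G : Type*} [Ring k] [Group G]

theorem coeff_geom_sum_of (a g : G) (n : ℕ) :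
    (∑ i ∈ range n, of k G a ^ i).coeff g =
      ∑ i ∈ range n, Finsupp.single (a ^ i) (1 : k) g := by
  simp [coeff_sum, coeff_single]

theorem coeff_geom_sum_of_one {a : G} (ha : 0 < orderOf a) :
    (∑ i ∈ range (orderOf a), of k G a ^ i).coeff 1 = 1 := by
  rw [coeff_geom_sum_of, sum_eq_single_of_mem 0 (mem_range.mpr ha)]
  · simp
  · intro i hi hi0
    exact Finsupp.single_eq_of_ne (pow_ne_one_of_lt_orderOf hi0 (mem_range.mp hi)).symm

theorem mem_zpowers_of_coeff_geom_sum_ne_zero {a g : G} {n : ℕ}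
    (h : (∑ i ∈ range n, of k G a ^ i).coeff g ≠ 0) : g ∈ Subgroup.zpowers a := by
  rw [coeff_geom_sum_of] at h
  obtain ⟨i, -, hi⟩ := exists_ne_zero_of_sum_ne_zero h
  exact ⟨i, by simpa using (Finsupp.single_apply_ne_zero.mp hi).1.symm⟩

theorem sub_one_mul_of_mul_geom_sum_ne_zero [Nontrivial k] {a b : G} (ha : 0 < orderOf a)
    (hb : b ∉ Subgroup.normalizer (Subgroup.zpowers a)) :
    (of k G a - 1) * of k G b * ∑ i ∈ range (orderOf a), of k G a ^ i ≠ 0 := by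
  set S := ∑ i ∈ range (orderOf a), of k G a ^ i
  intro hX
  have hcoeff : (of k G (a * b) * S).coeff (a * b) = (of k G b * S).coeff (a * b) := by
    rw [← sub_eq_zero, ← Finsupp.sub_apply, ← coeff_sub, ← sub_mul, (of k G).map_mul,
      ← sub_one_mul, hX, coeff_zero, Finsupp.zero_apply]
  simp only [of_apply, coeff_single_mul_apply, one_mul, inv_mul_cancel] at hcoeff
  rw [show S.coeff 1 = 1 from coeff_geom_sum_of_one ha] at hcoeff
  have hconj : b⁻¹ * a * b⁻¹⁻¹ ∈ Subgroup.zpowers a := by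
    rw [inv_inv, mul_assoc]
    exact mem_zpowers_of_coeff_geom_sum_ne_zero (k := k) (hcoeff ▸ one_ne_zero)
  exact hb <| by
    simpa using inv_mem (Subgroup.mem_normalizer_zpowers_of_conj_mem (orderOf_pos_iff.mp ha) hconj)

end MonoidAlgebra

theorem stmt_16_general {𝕂 : Type*} [CommRing 𝕂] [IsDomain 𝕂]
    {G : Type*} [Group G] (a b : G) (n : ℕ) (hn : 2 ≤ n) (ha : orderOf a = n)
    (hb : b ∉ Subgroup.normalizer (Subgroup.zpowers a))
    (ahat : MonoidAlgebra 𝕂 G)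
    (hahat : ahat = ∑ i ∈ Finset.range n, (MonoidAlgebra.of 𝕂 G a) ^ i) :
    (1 + (MonoidAlgebra.of 𝕂 G a - 1) * MonoidAlgebra.of 𝕂 G b * ahat) * (1 - (MonoidAlgebra.of 𝕂 G a - 1) * MonoidAlgebra.of 𝕂 G b * ahat) = 1 ∧
    (1 - (MonoidAlgebra.of 𝕂 G a - 1) * MonoidAlgebra.of 𝕂 G b * ahat) * (1 + (MonoidAlgebra.of 𝕂 G a - 1) * MonoidAlgebra.of 𝕂 G b * ahat) = 1 ∧
    (∀ w : (MonoidAlgebra 𝕂 G)ˣ, (w : MonoidAlgebra 𝕂 G) = 1 + (MonoidAlgebra.of 𝕂 G a - 1) * MonoidAlgebra.of 𝕂 G b * ahat →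
      ∀ m : ℤ, ((w ^ m : (MonoidAlgebra 𝕂 G)ˣ) : MonoidAlgebra 𝕂 G) = 1 + m • ((MonoidAlgebra.of 𝕂 G a - 1) * MonoidAlgebra.of 𝕂 G b * ahat)) ∧
    (MonoidAlgebra.of 𝕂 G a - 1) * MonoidAlgebra.of 𝕂 G b * ahat ≠ 0 ∧
    (1 + (MonoidAlgebra.of 𝕂 G a - 1) * MonoidAlgebra.of 𝕂 G b * ahat ≠ 1) ∧
    (CharZero 𝕂 →
      ∀ w : (MonoidAlgebra 𝕂 G)ˣ, (w : MonoidAlgebra 𝕂 G) = 1 + (MonoidAlgebra.of 𝕂 G a - 1) * MonoidAlgebra.of 𝕂 G b * ahat → ¬ IsOfFinOrder w) := by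
  subst hahat ha
  set X := (of 𝕂 G a - 1) * of 𝕂 G b * ∑ i ∈ range (orderOf a), of 𝕂 G a ^ i
  have hgeom : (∑ i ∈ range (orderOf a), of 𝕂 G a ^ i) * (of 𝕂 G a - 1) = 0 := by
    rw [geom_sum_mul, ← map_pow, pow_orderOf_eq_one, map_one, sub_self]
  have hsq : X * X = 0 := by
    calc X * X = (of 𝕂 G a - 1) * of 𝕂 G b *
          ((∑ i ∈ range (orderOf a), of 𝕂 G a ^ i) * (of 𝕂 G a - 1)) *
          of 𝕂 G b * ∑ i ∈ range (orderOf a), of 𝕂 G a ^ i := by simp only [X, mul_assoc]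
      _ = 0 := by rw [hgeom, mul_zero, zero_mul, zero_mul]
  have hX : X ≠ 0 := sub_one_mul_of_mul_geom_sum_ne_zero (by omega) hb
  refine ⟨one_add_mul_one_sub_of_mul_self_eq_zero hsq,
    one_sub_mul_one_add_of_mul_self_eq_zero hsq, fun w hw ↦ Units.val_zpow_of_val_eq_one_add hsq hw,
    hX, fun h ↦ hX (add_eq_left.mp h), fun _ w hw ↦ ?_⟩
  have : IsAddTorsionFree (MonoidAlgebra 𝕂 G) := .of_isTorsionFree 𝕂 _
  exact not_isOfFinOrder_of_val_eq_one_add hsq hX hw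

theorem stmt_16 {𝕂 : Type*} [CommRing 𝕂] [IsDomain 𝕂]
    {G : Type*} [Group G] (a b : G) (n : ℕ) (hn : 2 ≤ n) (ha : orderOf a = n)
    (hA : ¬ (Subgroup.zpowers a).Normal)
    (hb : b ∉ Subgroup.normalizer (Subgroup.zpowers a))
    (ahat : MonoidAlgebra 𝕂 G)
    (hahat : ahat = ∑ i ∈ Finset.range n, (MonoidAlgebra.of 𝕂 G a) ^ i) :
    (1 + (MonoidAlgebra.of 𝕂 G a - 1) * MonoidAlgebra.of 𝕂 G b * ahat) * (1 - (MonoidAlgebra.of 𝕂 G a - 1) * MonoidAlgebra.of 𝕂 G b * ahat) = 1 ∧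
    (1 - (MonoidAlgebra.of 𝕂 G a - 1) * MonoidAlgebra.of 𝕂 G b * ahat) * (1 + (MonoidAlgebra.of 𝕂 G a - 1) * MonoidAlgebra.of 𝕂 G b * ahat) = 1 ∧
    (∀ w : (MonoidAlgebra 𝕂 G)ˣ, (w : MonoidAlgebra 𝕂 G) = 1 + (MonoidAlgebra.of 𝕂 G a - 1) * MonoidAlgebra.of 𝕂 G b * ahat →
      ∀ m : ℤ, ((w ^ m : (MonoidAlgebra 𝕂 G)ˣ) : MonoidAlgebra 𝕂 G) = 1 + m • ((MonoidAlgebra.of 𝕂 G a - 1) * MonoidAlgebra.of 𝕂 G b * ahat)) ∧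
    (MonoidAlgebra.of 𝕂 G a - 1) * MonoidAlgebra.of 𝕂 G b * ahat ≠ 0 ∧
    (1 + (MonoidAlgebra.of 𝕂 G a - 1) * MonoidAlgebra.of 𝕂 G b * ahat ≠ 1) ∧
    (CharZero 𝕂 →
      ∀ w : (MonoidAlgebra 𝕂 G)ˣ, (w : MonoidAlgebra 𝕂 G) = 1 + (MonoidAlgebra.of 𝕂 G a - 1) * MonoidAlgebra.of 𝕂 G b * ahat → ¬ IsOfFinOrder w) :=
  stmt_16_general a b n hn ha hb ahat hahat
end
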